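/- arXiv:1608.03699 — 4 statements merged into one kernel-verified Lean document; each statement's English description precedes it below -/
import Mathlib

section
/- If a metric space (X,d) is locally represented in a metric space (X',ρ), then every generalized roundness exponent of (X',ρ) is a generalized roundness exponent of (X,d). Consequently, the generalized roundness of X' is at most the generalized roundness of X. -/
open Finset

/-- `p ≥ 0` is a generalized roundness exponent of the metric space `X`. -/
def IsGRExponent (X : Type*) [MetricSpace X] (p : ℝ) : Prop :=
  0 ≤ p ∧ ∀ (k : ℕ), 2 ≤ k → ∀ a b : Fin k → X,
    (∑ i : Fin k, ∑ j : Fin k,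
        if i < j then dist (a i) (a j) ^ p + dist (b i) (b j) ^ p else 0)
      ≤ ∑ i : Fin k, ∑ j : Fin k, dist (a i) (b j) ^ p

/-- The generalized roundness of `X`: the supremum of the generalized roundness exponents. -/
noncomputable def genRoundness (X : Type*) [MetricSpace X] : ENNReal :=
  ⨆ p ∈ {p : ℝ | IsGRExponent X p}, ENNReal.ofReal p

/-- `X` is locally represented in `X'`. -/
def LocallyRepresented (X X' : Type*) [MetricSpace X] [MetricSpace X'] : Prop :=
  ∀ ε : ℝ, 0 < ε → ∀ S : Finset X, S.Nonempty →
    ∃ (φ : X → X') (n : ℝ), 0 < n ∧ Set.InjOn φ (S : Set X) ∧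
      ∀ a ∈ S, ∀ b ∈ S,
        (1 - ε) * n * dist a b ≤ dist (φ a) (φ b) ∧
          dist (φ a) (φ b) ≤ (1 + ε) * n * dist a b

theorem locallyRepresented_transfers_grExponents
    (X X' : Type*) [MetricSpace X] [MetricSpace X']
    (h : LocallyRepresented X X') :
    (∀ p : ℝ, IsGRExponent X' p → IsGRExponent X p) ∧
      genRoundness X' ≤ genRoundness X := by
  have main : ∀ p : ℝ, IsGRExponent X' p → IsGRExponent X p := by
    classical
    rintro p ⟨hp0, hineq⟩
    refine ⟨hp0, ?_⟩
    intro k hk a b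
    set L := ∑ i : Fin k, ∑ j : Fin k,
        (if i < j then dist (a i) (a j) ^ p + dist (b i) (b j) ^ p else 0) with hL
    set R := ∑ i : Fin k, ∑ j : Fin k, dist (a i) (b j) ^ p with hR
    have key : ∀ ε ∈ Set.Ioo (0:ℝ) 1, (1-ε)^p * L ≤ (1+ε)^p * R := by
      rintro ε ⟨hε0, hε1⟩
      have hk0 : 0 < k := by omega
      set S : Finset X := Finset.image a Finset.univ ∪ Finset.image b Finset.univ with hS
      have hSne : S.Nonempty := ⟨a ⟨0, hk0⟩, by simp [hS]⟩
      obtain ⟨φ, n, hn, _, hφ⟩ := h ε hε0 S hSne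
      have hmemA : ∀ i, a i ∈ S := fun i => by simp [hS]
      have hmemB : ∀ i, b i ∈ S := fun i => by simp [hS]
      have h1ε : (0:ℝ) ≤ 1 - ε := by linarith
      have hlo : ∀ x ∈ S, ∀ y ∈ S,
          (1-ε)^p * n^p * dist x y ^ p ≤ dist (φ x) (φ y) ^ p := by
        intro x hx y hy
        have h1 := (hφ x hx y hy).1
        have h2 : ((1-ε) * n * dist x y) ^ p ≤ dist (φ x) (φ y) ^ p :=
          Real.rpow_le_rpow (mul_nonneg (mul_nonneg h1ε hn.le) dist_nonneg) h1 hp0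
        calc (1-ε)^p * n^p * dist x y ^ p = ((1-ε) * n * dist x y) ^ p := by
              rw [Real.mul_rpow (mul_nonneg h1ε hn.le) dist_nonneg,
                Real.mul_rpow h1ε hn.le]
          _ ≤ dist (φ x) (φ y) ^ p := h2
      have hup : ∀ x ∈ S, ∀ y ∈ S,
          dist (φ x) (φ y) ^ p ≤ (1+ε)^p * n^p * dist x y ^ p := by
        intro x hx y hy
        have h1 := (hφ x hx y hy).2
        have h2 : dist (φ x) (φ y) ^ p ≤ ((1+ε) * n * dist x y) ^ p :=
          Real.rpow_le_rpow dist_nonneg h1 hp0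
        calc dist (φ x) (φ y) ^ p ≤ ((1+ε) * n * dist x y) ^ p := h2
          _ = (1+ε)^p * n^p * dist x y ^ p := by
              rw [Real.mul_rpow (mul_nonneg (by linarith) hn.le) dist_nonneg,
                Real.mul_rpow (by linarith : (0:ℝ) ≤ 1+ε) hn.le]
      have H := hineq k hk (fun i => φ (a i)) (fun i => φ (b i))
      have hlow : (1-ε)^p * n^p * L ≤
          ∑ i : Fin k, ∑ j : Fin k,
            (if i < j then dist (φ (a i)) (φ (a j)) ^ p + dist (φ (b i)) (φ (b j)) ^ p else 0) := by
        rw [hL]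
        rw [Finset.mul_sum]
        refine Finset.sum_le_sum fun i _ => ?_
        rw [Finset.mul_sum]
        refine Finset.sum_le_sum fun j _ => ?_
        split
        · rw [mul_add]
          exact add_le_add (hlo _ (hmemA i) _ (hmemA j)) (hlo _ (hmemB i) _ (hmemB j))
        · simp
      have hupp : (∑ i : Fin k, ∑ j : Fin k, dist (φ (a i)) (φ (b j)) ^ p) ≤
          (1+ε)^p * n^p * R := by
        rw [hR, Finset.mul_sum]
        refine Finset.sum_le_sum fun i _ => ?_
        rw [Finset.mul_sum]
        exact Finset.sum_le_sum fun j _ => hup _ (hmemA i) _ (hmemB j)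
      have hchain : (1-ε)^p * n^p * L ≤ (1+ε)^p * n^p * R :=
        le_trans hlow (le_trans H hupp)
      have hnp : 0 < n ^ p := Real.rpow_pos_of_pos hn p
      nlinarith [hchain, hnp]
    -- take the limit ε → 0⁺
    have t0 : Filter.Tendsto (fun ε : ℝ => 1 - ε) (nhdsWithin 0 (Set.Ioi (0:ℝ))) (nhds 1) := by
      have : Filter.Tendsto (fun ε : ℝ => 1 - ε) (nhds 0) (nhds 1) := by
        have hcont : Continuous (fun ε : ℝ => 1 - ε) := by continuity
        simpa using hcont.tendsto (0:ℝ)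
      exact this.mono_left nhdsWithin_le_nhds
    have t0' : Filter.Tendsto (fun ε : ℝ => 1 + ε) (nhdsWithin 0 (Set.Ioi (0:ℝ))) (nhds 1) := by
      have : Filter.Tendsto (fun ε : ℝ => 1 + ε) (nhds 0) (nhds 1) := by
        have hcont : Continuous (fun ε : ℝ => 1 + ε) := by continuity
        simpa using hcont.tendsto (0:ℝ)
      exact this.mono_left nhdsWithin_le_nhds
    have hc : ContinuousAt (fun x : ℝ => x ^ p) 1 :=
      Real.continuousAt_rpow_const 1 p (Or.inl one_ne_zero)
    have t1 : Filter.Tendsto (fun ε : ℝ => (1-ε)^p * L)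
        (nhdsWithin 0 (Set.Ioi (0:ℝ))) (nhds L) := by
      have := (hc.tendsto.comp t0).mul_const L
      simpa using this
    have t2 : Filter.Tendsto (fun ε : ℝ => (1+ε)^p * R)
        (nhdsWithin 0 (Set.Ioi (0:ℝ))) (nhds R) := by
      have := (hc.tendsto.comp t0').mul_const R
      simpa using this
    have hev : ∀ᶠ ε in nhdsWithin 0 (Set.Ioi (0:ℝ)), (1-ε)^p * L ≤ (1+ε)^p * R := by
      filter_upwards [Ioo_mem_nhdsGT_of_mem (Set.mem_Ico.mpr ⟨le_refl 0, zero_lt_one⟩)]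
        with ε hε using key ε hε
    exact le_of_tendsto_of_tendsto t1 t2 hev
  refine ⟨main, ?_⟩
  exact iSup₂_le fun p hp => le_iSup₂_of_le p (main p hp) le_rfl
end

section
/- Every metric space containing a metric midpoint has generalized roundness at most 2. Precisely: if (X,d) contains three distinct points x, z, y with d(x,z) = d(z,y) = d(x,y)/2 > 0, then any generalized roundness exponent p of (X,d) satisfies p ≤ 2. -/
open Finset

/-- A metric space containing a metric midpoint has generalized roundness at most `2`. -/
theorem grExponent_le_two_of_midpoint (X : Type*) [MetricSpace X]
    (x z y : X) (hxz : x ≠ z) (hzy : z ≠ y) (hxy : x ≠ y)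
    (h1 : dist x z = dist z y) (h2 : dist x z = dist x y / 2) (h3 : 0 < dist x z)
    (p : ℝ) (hp : IsGRExponent X p) : p ≤ 2 := by
  rcases hp with ⟨hp0, hineq⟩
  rcases eq_or_lt_of_le hp0 with h | hppos
  · linarith
  have key := hineq 2 le_rfl ![x, y] ![z, z]
  simp [Fin.sum_univ_two, Fin.isValue, show ¬ ((0:Fin 2) < 0) from by decide,
    show ((0:Fin 2) < 1) from by decide, show ¬ ((1:Fin 2) < 0) from by decide,
    show ¬ ((1:Fin 2) < 1) from by decide] at key
  set d := dist x z with hd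
  have hxy2 : dist x y = 2 * d := by rw [h2]; ring
  have hyz : dist y z = d := by rw [dist_comm]; exact h1.symm
  rw [hxy2, hyz, Real.zero_rpow (ne_of_gt hppos),
    Real.mul_rpow (by norm_num) h3.le] at key
  have h2p : (2:ℝ) ^ p ≤ 2 ^ (2:ℝ) := by
    have hdp : (0:ℝ) < d ^ p := Real.rpow_pos_of_pos h3 p
    rw [show ((2:ℝ) ^ (2:ℝ)) = 4 by
      rw [show (2:ℝ) = ((2:ℕ):ℝ) by norm_num, Real.rpow_natCast]; norm_num]
    nlinarith
  exact (Real.rpow_le_rpow_left_iff (by norm_num : (1:ℝ) < 2)).mp h2p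
end

section
/- Suppose a metric space (X,d) contains points v₀ and a_1,...,a_q (q ≥ 2 distinct points) such that d(a_i, v₀) = M for all i and d(a_i, a_j) ≥ 2(M − M_k) for all i ≠ j, where 0 ≤ M_k < M/2. Then every generalized roundness exponent p of (X,d) satisfies the inequality (1/2)·q·(q−1)·(2(M − M_k))^p ≤ q²·M^p, and hence p ≤ ln(2 + 2/(q−1)) / ln(2 − 2·M_k/M). -/
/-!
Put `b_j = v₀` for every `j` in the roundness inequality. Its left side is then at least
`(q choose 2) · (2(M - M_k))^p`, and its right side is exactly `q² M^p`. Writing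
`2(M - M_k) = c M` with `c = 2 - 2 M_k / M > 1` and cancelling `M^p` leaves
`c^p ≤ 2q / (q - 1) = 2 + 2 / (q - 1)`, which is the logarithmic bound.
-/

open Finset

theorem sum_sum_ite_lt_const {ι : Type*} [Fintype ι] [LinearOrder ι] (c : ℝ) :
    ∑ i : ι, ∑ j : ι, (if i < j then c else 0)
      = (1 / 2) * Fintype.card ι * (Fintype.card ι - 1) * c := by
  have hswap : ∑ i : ι, ∑ j : ι, (if j < i then c else 0)
      = ∑ i : ι, ∑ j : ι, (if i < j then c else 0) := Finset.sum_comm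
  have hpair : ∀ i j : ι,
      (if i < j then c else 0) + (if j < i then c else 0) = c - if i = j then c else 0 := by
    intro i j
    rcases lt_trichotomy i j with h | rfl | h
    · simp [h, h.ne, h.not_gt]
    · simp
    · simp [h, h.ne', h.not_gt]
  have htotal := congrArg (fun f : ι → ι → ℝ => ∑ i, ∑ j, f i j) (funext₂ hpair)
  simp only [sum_add_distrib, sum_sub_distrib, hswap, sum_ite_eq, mem_univ, if_true,
    sum_const, card_univ, nsmul_eq_mul] at htotal
  linarith

theorem IsGRExponent.sum_sum_dist_rpow_le_of_star {X : Type*} [MetricSpace X] {p : ℝ}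
    (hp : IsGRExponent X p) {k : ℕ} (hk : 2 ≤ k) (a : Fin k → X) (v : X) :
    ∑ i : Fin k, ∑ j : Fin k, (if i < j then dist (a i) (a j) ^ p else 0)
      ≤ k * ∑ i : Fin k, dist (a i) v ^ p :=
  calc ∑ i : Fin k, ∑ j : Fin k, (if i < j then dist (a i) (a j) ^ p else 0)
      ≤ ∑ i : Fin k, ∑ j : Fin k,
          if i < j then dist (a i) (a j) ^ p + dist v v ^ p else 0 := by
        gcongr with i _ j _
        split_ifs
        -- `dist v v ^ p = 0 ^ p` is `1` when `p = 0`, so it is only bounded below by `0`.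
        · exact le_add_of_nonneg_right (Real.rpow_nonneg dist_nonneg p)
        · rfl
    _ ≤ ∑ i : Fin k, ∑ _j : Fin k, dist (a i) v ^ p := hp.2 k hk a fun _ => v
    _ = k * ∑ i : Fin k, dist (a i) v ^ p := by simp [mul_sum]

theorem IsGRExponent.separated_star_bound {X : Type*} [MetricSpace X] {p : ℝ}
    (hp : IsGRExponent X p) {k : ℕ} (hk : 2 ≤ k) (a : Fin k → X) (v : X) {r M : ℝ}
    (hr : 0 ≤ r) (hsep : ∀ i j, i ≠ j → r ≤ dist (a i) (a j)) (hdist : ∀ i, dist (a i) v = M) :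
    (1 / 2) * k * (k - 1) * r ^ p ≤ (k : ℝ) ^ 2 * M ^ p :=
  calc (1 / 2) * k * (k - 1) * r ^ p
      = ∑ i : Fin k, ∑ j : Fin k, (if i < j then r ^ p else 0) := by
        rw [sum_sum_ite_lt_const, Fintype.card_fin]
    _ ≤ ∑ i : Fin k, ∑ j : Fin k, (if i < j then dist (a i) (a j) ^ p else 0) := by
        gcongr with i _ j _
        split_ifs with hij
        · exact Real.rpow_le_rpow hr (hsep i j hij.ne) hp.1
        · rfl
    _ ≤ k * ∑ i : Fin k, dist (a i) v ^ p := hp.sum_sum_dist_rpow_le_of_star hk a v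
    _ = (k : ℝ) ^ 2 * M ^ p := by simp [hdist]; ring

theorem grExponent_star_bound_general (X : Type*) [MetricSpace X]
    (q : ℕ) (hq : 2 ≤ q) (v₀ : X) (a : Fin q → X)
    (M Mk : ℝ) (hMk0 : 0 ≤ Mk) (hMk : Mk < M / 2)
    (hdist : ∀ i, dist (a i) v₀ = M)
    (hsep : ∀ i j, i ≠ j → 2 * (M - Mk) ≤ dist (a i) (a j))
    (p : ℝ) (hp : IsGRExponent X p) :
    (1 / 2) * q * (q - 1) * (2 * (M - Mk)) ^ p ≤ (q : ℝ) ^ 2 * M ^ p ∧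
      p ≤ Real.log (2 + 2 / ((q : ℝ) - 1)) / Real.log (2 - 2 * Mk / M) := by
  have hM : 0 < M := by linarith
  have hstar := hp.separated_star_bound hq a v₀ (by linarith) hsep hdist
  refine ⟨hstar, ?_⟩
  set c : ℝ := 2 - 2 * Mk / M
  have hc : 1 < c := by
    have : 2 * Mk / M < 1 := by rw [div_lt_one hM]; linarith
    linarith
  have hcM : 2 * (M - Mk) = c * M := by
    simp only [c, sub_mul, div_mul_cancel₀ _ hM.ne']
    ring
  have hq1 : (0 : ℝ) < q - 1 := by
    have : (2 : ℝ) ≤ q := mod_cast hq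
    linarith
  have hcp : c ^ p ≤ 2 + 2 / ((q : ℝ) - 1) := by
    rw [hcM, Real.mul_rpow (by linarith) hM.le] at hstar
    have hcq : q * (c ^ p * (q - 1)) ≤ q * (2 * q) := by
      nlinarith [Real.rpow_pos_of_pos hM p]
    rw [show 2 + 2 / ((q : ℝ) - 1) = 2 * q / (q - 1) by field_simp; ring, le_div_iff₀ hq1]
    exact le_of_mul_le_mul_left hcq (by linarith)
  rw [Real.log_div_log, Real.le_logb_iff_rpow_le hc (by positivity)]
  exact hcp

/-- A star-like configuration forces an upper bound on the generalized roundness. -/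
theorem grExponent_star_bound (X : Type*) [MetricSpace X]
    (q : ℕ) (hq : 2 ≤ q) (v₀ : X) (a : Fin q → X) (ha : Function.Injective a)
    (M Mk : ℝ) (hMk0 : 0 ≤ Mk) (hMk : Mk < M / 2)
    (hdist : ∀ i, dist (a i) v₀ = M)
    (hsep : ∀ i j, i ≠ j → 2 * (M - Mk) ≤ dist (a i) (a j))
    (p : ℝ) (hp : IsGRExponent X p) :
    (1 / 2) * q * (q - 1) * (2 * (M - Mk)) ^ p ≤ (q : ℝ) ^ 2 * M ^ p ∧
      p ≤ Real.log (2 + 2 / ((q : ℝ) - 1)) / Real.log (2 - 2 * Mk / M) :=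
  grExponent_star_bound_general X q hq v₀ a M Mk hMk0 hMk hdist hsep p hp
end

section
/- Let X and X' be normed spaces and suppose that for every ε > 0 and every finite-dimensional subspace E ⊆ X there is an injective linear map T : E → X' with (1−ε)‖x‖ ≤ ‖Tx‖ ≤ (1+ε)‖x‖ for all x ∈ E. Then every generalized roundness exponent of X' (with the metric induced by its norm) is a generalized roundness exponent of X. -/
open Finset

/-- If `X` is finitely represented in `X'` (via injective linear `(1+ε)`-isomorphisms on
finite-dimensional subspaces), then every generalized roundness exponent of `X'` is a
generalized roundness exponent of `X`. -/
theorem finRep_transfers_grExponents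
    (X X' : Type*) [NormedAddCommGroup X] [NormedSpace ℝ X]
    [NormedAddCommGroup X'] [NormedSpace ℝ X']
    (h : ∀ ε : ℝ, 0 < ε → ∀ E : Subspace ℝ X, FiniteDimensional ℝ E →
      ∃ T : E →ₗ[ℝ] X', Function.Injective T ∧
        ∀ x : E, (1 - ε) * ‖x‖ ≤ ‖T x‖ ∧ ‖T x‖ ≤ (1 + ε) * ‖x‖) :
    ∀ p : ℝ, IsGRExponent X' p → IsGRExponent X p := by
  rintro p ⟨hp, hgr⟩
  refine ⟨hp, ?_⟩
  intro k hk a b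
  set L := (∑ i : Fin k, ∑ j : Fin k,
      if i < j then dist (a i) (a j) ^ p + dist (b i) (b j) ^ p else 0) with hL
  set R := ∑ i : Fin k, ∑ j : Fin k, dist (a i) (b j) ^ p with hR
  have key : ∀ ε : ℝ, ε ∈ Set.Ioo (0:ℝ) 1 → (1-ε)^p * L ≤ (1+ε)^p * R := by
    rintro ε ⟨hε0, hε1⟩
    set E := Submodule.span ℝ (Set.range a ∪ Set.range b) with hE
    have hfin : FiniteDimensional ℝ E :=
      FiniteDimensional.span_of_finite ℝ ((Set.finite_range a).union (Set.finite_range b))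
    obtain ⟨T, -, hT⟩ := h ε hε0 E hfin
    have ha : ∀ i, a i ∈ E := fun i => Submodule.subset_span (Or.inl ⟨i, rfl⟩)
    have hb : ∀ i, b i ∈ E := fun i => Submodule.subset_span (Or.inr ⟨i, rfl⟩)
    set am : Fin k → E := fun i => ⟨a i, ha i⟩ with ham
    set bm : Fin k → E := fun i => ⟨b i, hb i⟩ with hbm
    have main := hgr k hk (fun i => T (am i)) (fun i => T (bm i))
    have hnorm : ∀ x y : E, dist (T x) (T y) = ‖T (x - y)‖ := by
      intro x y; rw [dist_eq_norm, ← map_sub]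
    have hEnorm : ∀ x y : E, ‖x - y‖ = dist ((x : X)) ((y : X)) := by
      intro x y; rw [dist_eq_norm]; rfl
    have hlow : ∀ x y : E, (1-ε)^p * dist (x : X) (y : X) ^ p ≤ dist (T x) (T y) ^ p := by
      intro x y
      rw [hnorm, ← Real.mul_rpow (by linarith) dist_nonneg]
      apply Real.rpow_le_rpow (mul_nonneg (by linarith) dist_nonneg) _ hp
      rw [← hEnorm]; exact (hT _).1
    have hhigh : ∀ x y : E, dist (T x) (T y) ^ p ≤ (1+ε)^p * dist (x : X) (y : X) ^ p := by
      intro x y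
      rw [hnorm, ← Real.mul_rpow (by linarith) dist_nonneg]
      apply Real.rpow_le_rpow (norm_nonneg _) _ hp
      rw [← hEnorm]; exact (hT _).2
    calc (1-ε)^p * L
        ≤ ∑ i : Fin k, ∑ j : Fin k, if i < j then
            dist (T (am i)) (T (am j)) ^ p + dist (T (bm i)) (T (bm j)) ^ p else 0 := by
          rw [hL, Finset.mul_sum]
          refine Finset.sum_le_sum fun i _ => ?_
          rw [Finset.mul_sum]
          refine Finset.sum_le_sum fun j _ => ?_
          split
          · rw [mul_add]; exact add_le_add (hlow (am i) (am j)) (hlow (bm i) (bm j))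
          · simp
      _ ≤ ∑ i : Fin k, ∑ j : Fin k, dist (T (am i)) (T (bm j)) ^ p := main
      _ ≤ (1+ε)^p * R := by
          rw [hR, Finset.mul_sum]
          refine Finset.sum_le_sum fun i _ => ?_
          rw [Finset.mul_sum]
          exact Finset.sum_le_sum fun j _ => hhigh (am i) (bm j)
  have hmem : Set.Ioo (0:ℝ) 1 ∈ nhdsWithin (0:ℝ) (Set.Ioi 0) :=
    Ioo_mem_nhdsGT_of_mem ⟨le_refl 0, one_pos⟩
  have c1 : Filter.Tendsto (fun ε : ℝ => (1-ε)^p * L) (nhdsWithin 0 (Set.Ioi 0)) (nhds L) := by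
    have : ContinuousAt (fun ε : ℝ => (1-ε)^p * L) 0 := by
      exact (((Real.continuousAt_rpow_const _ _ (Or.inr hp)).comp
        ((continuous_const.sub continuous_id).continuousAt)).mul continuousAt_const)
    have := this.tendsto.mono_left (nhdsWithin_le_nhds (s := Set.Ioi (0:ℝ)))
    simpa using this
  have c2 : Filter.Tendsto (fun ε : ℝ => (1+ε)^p * R) (nhdsWithin 0 (Set.Ioi 0)) (nhds R) := by
    have : ContinuousAt (fun ε : ℝ => (1+ε)^p * R) 0 := by
      exact (((Real.continuousAt_rpow_const _ _ (Or.inr hp)).comp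
        ((continuous_const.add continuous_id).continuousAt)).mul continuousAt_const)
    have := this.tendsto.mono_left (nhdsWithin_le_nhds (s := Set.Ioi (0:ℝ)))
    simpa using this
  refine le_of_tendsto_of_tendsto c1 c2 ?_
  filter_upwards [hmem] with ε hε using key ε hε
end
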